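/- arXiv:2105.02370 — 4 statements merged into one kernel-verified Lean document; each statement's English description precedes it below -/
import Mathlib

section
/- Let δ_A be m_a×n_a and δ_B be m_b×n_b matrices over F₂, and let (L,R) with L ∈ F₂^{n_a×n_b}, R ∈ F₂^{m_a×m_b} satisfy δ_A·L + R·δ_B = 0. Then L can be written as K_A + U·δ_B where every column of K_A lies in ker δ_A and U ∈ F₂^{n_a×m_b}, and R can be written as K̄_B + δ_A·V where every row of K̄_B lies in ker δ_Bᵀ and V ∈ F₂^{n_a×m_b}. -/
/-!
Over a field every matrix `A` has a generalized inverse `A'` with `A A' A = A`. Given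
`δ_A L + R δ_B = 0`, put `U = δ_A' (δ_A L) δ_B'`. Since `δ_A L = -R δ_B` lies both in the column
space of `δ_A` and in the row space of `δ_B`, the two generalized inverses cancel:
`δ_A U δ_B = δ_A L`. Hence `K_A = L - U δ_B` is killed by `δ_A` and `K̄_B = R + δ_A U` is killed
by `δ_B` on the right, and `V = -U`.
-/

theorem LinearMap.exists_comp_comp_eq_self {K V W : Type*} [DivisionRing K]
    [AddCommGroup V] [Module K V] [AddCommGroup W] [Module K W] (f : V →ₗ[K] W) :
    ∃ g : W →ₗ[K] V, f ∘ₗ g ∘ₗ f = f := by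
  -- `g` extends from `range f` to `W` a right inverse of `f` onto its range.
  obtain ⟨s, hs⟩ := f.rangeRestrict.exists_rightInverse_of_surjective f.range_rangeRestrict
  obtain ⟨g, hg⟩ := LinearMap.exists_extend s
  refine ⟨g, LinearMap.ext fun x => ?_⟩
  have hgfx : g (f x) = s ⟨f x, LinearMap.mem_range_self f x⟩ := by
    rw [← hg]
    rfl
  simpa [hgfx] using
    congrArg Subtype.val (LinearMap.congr_fun hs ⟨f x, LinearMap.mem_range_self f x⟩)

namespace Matrix

variable {K ι κ μ ν : Type*}

theorem exists_mul_mul_eq_self [Field K] [Fintype ι] [Fintype κ] [DecidableEq ι] [DecidableEq κ]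
    (A : Matrix ι κ K) :
    ∃ A' : Matrix κ ι K, A * A' * A = A := by
  obtain ⟨g, hg⟩ := (toLin' A).exists_comp_comp_eq_self
  refine ⟨LinearMap.toMatrix' g, toLin'.injective ?_⟩
  rw [toLin'_mul, toLin'_mul, toLin'_toMatrix', LinearMap.comp_assoc, hg]

theorem mul_mul_mul_mul_eq_of_mul_eq [Semiring K] [Fintype ι] [Fintype κ] [Fintype μ]
    [Fintype ν] {A : Matrix ι κ K} {A' : Matrix κ ι K} {C : Matrix μ ν K} {C' : Matrix ν μ K}
    (hA : A * A' * A = A) (hC : C * C' * C = C)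
    {X : Matrix κ ν K} {Y : Matrix ι μ K} (h : A * X = Y * C) :
    A * (A' * (A * X) * C' * C) = A * X :=
  calc A * (A' * (A * X) * C' * C) = A * A' * A * X * (C' * C) := by simp only [Matrix.mul_assoc]
    _ = Y * (C * C' * C) := by rw [hA, h]; simp only [Matrix.mul_assoc]
    _ = A * X := by rw [hC, h]

theorem exists_mul_sub_eq_zero_and_add_mul_eq_zero [Field K] [Fintype ι] [Fintype κ]
    [Fintype μ] [Fintype ν] [DecidableEq ι] [DecidableEq κ] [DecidableEq μ] [DecidableEq ν]
    {A : Matrix ι κ K} {C : Matrix μ ν K} {L : Matrix κ ν K} {R : Matrix ι μ K}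
    (h : A * L + R * C = 0) :
    ∃ U : Matrix κ μ K, A * (L - U * C) = 0 ∧ (R + A * U) * C = 0 := by
  obtain ⟨A', hA⟩ := exists_mul_mul_eq_self A
  obtain ⟨C', hC⟩ := exists_mul_mul_eq_self C
  have hAL : A * L = -R * C := by rw [Matrix.neg_mul, eq_neg_iff_add_eq_zero, h]
  have hU := mul_mul_mul_mul_eq_of_mul_eq hA hC hAL
  refine ⟨A' * (A * L) * C', ?_, ?_⟩
  · rw [Matrix.mul_sub, hU, sub_self]
  · rw [Matrix.add_mul, Matrix.mul_assoc A, hU, add_comm, h]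

theorem mulVec_col_eq_zero_of_mul_eq_zero [NonUnitalNonAssocSemiring K] [Fintype κ]
    {A : Matrix ι κ K} {M : Matrix κ ν K} (h : A * M = 0) (j : ν) : A *ᵥ (fun i => M i j) = 0 :=
  funext fun k => congrFun (congrFun h k) j

theorem transpose_mulVec_row_eq_zero_of_mul_eq_zero [NonUnitalCommSemiring K] [Fintype κ]
    {M : Matrix ι κ K} {C : Matrix κ ν K} (h : M * C = 0) (i : ι) : Cᵀ *ᵥ M i = 0 := by
  rw [mulVec_transpose, ← mul_apply_eq_vecMul, h]
  rfl

end Matrix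

/-- Kernel characterization for the syndrome map of the hypergraph product code:
if `δ_A L + R δ_B = 0` then `L = K_A + U δ_B` with all columns of `K_A` in `ker δ_A`,
and `R = K̄_B + δ_A V` with all rows of `K̄_B` in `ker δ_Bᵀ`. -/
theorem kernel_characterization
    (ma na mb nb : ℕ)
    (δA : Matrix (Fin ma) (Fin na) (ZMod 2))
    (δB : Matrix (Fin mb) (Fin nb) (ZMod 2))
    (L : Matrix (Fin na) (Fin nb) (ZMod 2))
    (R : Matrix (Fin ma) (Fin mb) (ZMod 2))
    (h : δA * L + R * δB = 0) :
    (∃ (KA : Matrix (Fin na) (Fin nb) (ZMod 2)) (U : Matrix (Fin na) (Fin mb) (ZMod 2)),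
        L = KA + U * δB ∧ ∀ j, δA.mulVec (fun i => KA i j) = 0) ∧
    (∃ (KB : Matrix (Fin ma) (Fin mb) (ZMod 2)) (V : Matrix (Fin na) (Fin mb) (ZMod 2)),
        R = KB + δA * V ∧ ∀ i, δB.transpose.mulVec (fun j => KB i j) = 0) := by
  obtain ⟨U, hKA, hKB⟩ := Matrix.exists_mul_sub_eq_zero_and_add_mul_eq_zero h
  refine ⟨⟨L - U * δB, U, (sub_add_cancel L _).symm,
      Matrix.mulVec_col_eq_zero_of_mul_eq_zero hKA⟩,
    ⟨R + δA * U, -U, ?_, Matrix.transpose_mulVec_row_eq_zero_of_mul_eq_zero hKB⟩⟩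
  rw [Matrix.mul_neg, add_neg_cancel_right]
end

section
/- Let δ_A be m_a×n_a and δ_B be m_b×n_b matrices over F₂. Let d_a be the minimum Hamming weight of a nonzero vector in ker δ_A. Suppose (L,R) satisfies δ_A L + R δ_B = 0 and there exist a standard unit vector f ∈ F₂^{n_a} and a vector k ∈ ker δ_B such that fᵀ L k = 1. Then the matrix L has at least d_a nonzero rows. -/
/-!
The syndrome equation `δA L = -R δB` sends `ker δB` into `ker δA` through
`k ↦ L k`. Since `fᵀ L k = 1`, the vector `L k` is a nonzero codeword of `ker δA`, so it has weight
at least `d_a`; and `(L k)ᵢ` can only be nonzero when row `i` of `L` is.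
-/

open Matrix

namespace Matrix

variable {l m n o R : Type*} [Fintype m] [Fintype n]

theorem mulVec_mulVec_eq_zero_of_mul_add_mul_eq_zero [CommRing R] [Fintype o]
    {A : Matrix l m R} {L : Matrix m n R} {C : Matrix l o R} {B : Matrix o n R}
    (hsyn : A * L + C * B = 0) {k : n → R} (hk : B *ᵥ k = 0) : A *ᵥ (L *ᵥ k) = 0 := by
  rw [mulVec_mulVec, eq_neg_of_add_eq_zero_left hsyn, neg_mulVec, ← mulVec_mulVec, hk,
    mulVec_zero, neg_zero]

theorem hammingNorm_mulVec_le_ncard_ne_zero_rows [NonUnitalNonAssocSemiring R] [DecidableEq R]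
    (L : Matrix m n R) (k : n → R) : hammingNorm (L *ᵥ k) ≤ {i | (fun j => L i j) ≠ 0}.ncard := by
  calc hammingNorm (L *ᵥ k) ≤ hammingNorm (fun i j => L i j) :=
        hammingNorm_comp_le_hammingNorm (fun _ row => row ⬝ᵥ k) fun _ => zero_dotProduct k
    _ = {i | (fun j => L i j) ≠ 0}.ncard := by
        rw [hammingNorm, Set.ncard_eq_toFinset_card']
        congr
        ext i
        simp

end Matrix

theorem logical_operator_row_weight_general
    (ma na mb nb : ℕ)
    (δA : Matrix (Fin ma) (Fin na) (ZMod 2))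
    (δB : Matrix (Fin mb) (Fin nb) (ZMod 2))
    (da : ℕ)
    (hda : ∀ v : Fin na → ZMod 2, v ≠ 0 → δA.mulVec v = 0 → da ≤ hammingNorm v)
    (L : Matrix (Fin na) (Fin nb) (ZMod 2))
    (R : Matrix (Fin ma) (Fin mb) (ZMod 2))
    (hsyn : δA * L + R * δB = 0)
    (f : Fin na → ZMod 2)
    (k : Fin nb → ZMod 2) (hk : δB.mulVec k = 0)
    (hanti : dotProduct f (L.mulVec k) = 1) :
    da ≤ {i | (fun j => L i j) ≠ 0}.ncard := by
  have hne : L *ᵥ k ≠ 0 := by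
    rintro h
    rw [h, dotProduct_zero] at hanti
    exact zero_ne_one hanti
  calc da ≤ hammingNorm (L *ᵥ k) :=
        hda _ hne (mulVec_mulVec_eq_zero_of_mul_add_mul_eq_zero hsyn hk)
    _ ≤ _ := hammingNorm_mulVec_le_ncard_ne_zero_rows L k

/-- Half of Proposition 2: a syndrome-zero `Z`-operator `(L, R)` that anticommutes with
a left logical `X`-operator `f ⊗ k` (with `f` a standard unit vector and `k ∈ ker δ_B`)
has at least `d_a` nonzero rows in `L`, where `d_a` bounds below the weight of any
nonzero vector in `ker δ_A`. -/
theorem logical_operator_row_weight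
    (ma na mb nb : ℕ)
    (δA : Matrix (Fin ma) (Fin na) (ZMod 2))
    (δB : Matrix (Fin mb) (Fin nb) (ZMod 2))
    (da : ℕ)
    (hda : ∀ v : Fin na → ZMod 2, v ≠ 0 → δA.mulVec v = 0 → da ≤ hammingNorm v)
    (L : Matrix (Fin na) (Fin nb) (ZMod 2))
    (R : Matrix (Fin ma) (Fin mb) (ZMod 2))
    (hsyn : δA * L + R * δB = 0)
    (f : Fin na → ZMod 2) (hf : ∃ i₀, f = Pi.single i₀ 1)
    (k : Fin nb → ZMod 2) (hk : δB.mulVec k = 0)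
    (hanti : dotProduct f (L.mulVec k) = 1) :
    da ≤ {i | (fun j => L i j) ≠ 0}.ncard :=
  logical_operator_row_weight_general ma na mb nb δA δB da hda L R hsyn f k hk hanti
end

section
/- Let δ_A be m_a×n_a and δ_B be m_b×n_b matrices over F₂, with d_a the minimum weight of a nonzero vector in ker δ_A and d_bᵀ the minimum weight of a nonzero vector in ker δ_Bᵀ. Suppose (L,R) satisfies δ_A L + R δ_B = 0, L has fewer than d_a nonzero rows, and R has fewer than d_bᵀ nonzero columns. Then for every standard unit vector f ∈ F₂^{n_a} and every k ∈ ker δ_B we have fᵀ L k = 0, and for every k̄ ∈ ker δ_Aᵀ and every standard unit vector g ∈ F₂^{m_b} we have k̄ᵀ R g = 0. -/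
/-! Applying the syndrome equation `δA L + R δB = 0` to `k ∈ ker δB` shows that `L k ∈ ker δA`.
Every nonzero entry of `L k` sits in a nonzero row of `L`, so `L k` has weight below `d_a` and
must vanish; hence `fᵀ L k = 0` for every `f`. Transposing the syndrome equation exchanges the
roles of `(δA, L)` and `(δBᵀ, Rᵀ)`, and the same argument gives `Rᵀ k̄ = 0`. -/

open Matrix

variable {m n p q R : Type*} [Fintype m] [Fintype n] [Fintype q]

theorem hammingNorm_mulVec_le_ncard_nonzero_rows [NonUnitalNonAssocSemiring R] [DecidableEq R]
    (M : Matrix m n R) (v : n → R) :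
    hammingNorm (M *ᵥ v) ≤ {i | (fun j => M i j) ≠ 0}.ncard := by
  classical
  rw [Set.ncard_eq_toFinset_card']
  refine Finset.card_le_card fun i hi => ?_
  simp only [Finset.mem_filter, Finset.mem_univ, true_and, Set.mem_toFinset,
    Set.mem_ofPred_eq] at hi ⊢
  intro hrow
  exact hi (by simp [mulVec, dotProduct, hrow])

theorem mulVec_eq_zero_of_syndrome_eq_zero [Ring R] [DecidableEq R]
    {A : Matrix p m R} {L : Matrix m n R} {S : Matrix p q R} {B : Matrix q n R} {d : ℕ}
    (hd : ∀ v : m → R, v ≠ 0 → A *ᵥ v = 0 → d ≤ hammingNorm v)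
    (hsyn : A * L + S * B = 0) (hrow : {i | (fun j => L i j) ≠ 0}.ncard < d)
    {k : n → R} (hk : B *ᵥ k = 0) : L *ᵥ k = 0 := by
  have hker : A *ᵥ (L *ᵥ k) = 0 := by
    rw [mulVec_mulVec, eq_neg_of_add_eq_zero_left hsyn, neg_mulVec, ← mulVec_mulVec, hk,
      mulVec_zero, neg_zero]
  by_contra hne
  have := hd _ hne hker
  have := hammingNorm_mulVec_le_ncard_nonzero_rows L k
  omega

/-- Contrapositive of Proposition 2: a syndrome-zero operator `(L, R)` with fewer than
`d_a` nonzero rows in `L` and fewer than `d_bᵀ` nonzero columns in `R` commutes with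
all logical `X`-generators of the hypergraph product code. -/
theorem low_weight_commutes_with_logicals
    (ma na mb nb : ℕ)
    (δA : Matrix (Fin ma) (Fin na) (ZMod 2))
    (δB : Matrix (Fin mb) (Fin nb) (ZMod 2))
    (da dbT : ℕ)
    (hda : ∀ v : Fin na → ZMod 2, v ≠ 0 → δA.mulVec v = 0 → da ≤ hammingNorm v)
    (hdbT : ∀ w : Fin mb → ZMod 2, w ≠ 0 → δB.transpose.mulVec w = 0 → dbT ≤ hammingNorm w)
    (L : Matrix (Fin na) (Fin nb) (ZMod 2))
    (R : Matrix (Fin ma) (Fin mb) (ZMod 2))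
    (hsyn : δA * L + R * δB = 0)
    (hrowL : {i | (fun j => L i j) ≠ 0}.ncard < da)
    (hcolR : {j | (fun i => R i j) ≠ 0}.ncard < dbT) :
    (∀ (f : Fin na → ZMod 2), (∃ i₀, f = Pi.single i₀ 1) →
      ∀ k : Fin nb → ZMod 2, δB.mulVec k = 0 → dotProduct f (L.mulVec k) = 0) ∧
    (∀ kbar : Fin ma → ZMod 2, δA.transpose.mulVec kbar = 0 →
      ∀ g : Fin mb → ZMod 2, (∃ j₀, g = Pi.single j₀ 1) →
        dotProduct kbar (R.mulVec g) = 0) := by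
  have hsynT : δBᵀ * Rᵀ + Lᵀ * δAᵀ = 0 := by
    rw [← transpose_mul, ← transpose_mul, add_comm, ← transpose_add, hsyn, transpose_zero]
  constructor
  · intro f _ k hk
    rw [mulVec_eq_zero_of_syndrome_eq_zero hda hsyn hrowL hk, dotProduct_zero]
  · intro kbar hkbar g _
    rw [dotProduct_mulVec, ← mulVec_transpose,
      mulVec_eq_zero_of_syndrome_eq_zero hdbT hsynT hcolR hkbar, zero_dotProduct]
end

section
/- Let δ_A be m_a×n_a and δ_B be m_b×n_b matrices over F₂, and fix a complement W_B of im δ_Bᵀ in F₂^{n_b} spanned by standard unit vectors. Suppose (L,R) satisfies δ_A L + R δ_B = 0 and there exist a unit vector f ∈ F₂^{n_a} and k ∈ ker δ_B with fᵀ L k = 1. Write L = M_L + O_L with all rows of M_L in im δ_Bᵀ and all rows of O_L in W_B. Then O_L has at least d_a nonzero rows, where d_a is the minimum weight of a nonzero vector in ker δ_A. -/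
/-!
Since `δA L = -R δB`, the vector `L k` lies in `ker δA`, and it is nonzero because `fᵀ L k = 1`.
Every row of `M_L` is of the form `δBᵀ w`, hence orthogonal to `k ∈ ker δB`; so `L k = O_L k`,
and `O_L k` can only be nonzero in coordinates where the row of `O_L` is nonzero.
-/

open Matrix

variable {α m n p q : Type*} [Fintype n] [Fintype p]

theorem Matrix.dotProduct_eq_zero_of_mem_range_transpose [CommSemiring α] [Fintype m]
    {B : Matrix m n α} {x k : n → α} (hx : x ∈ LinearMap.range Bᵀ.mulVecLin)
    (hk : B *ᵥ k = 0) : x ⬝ᵥ k = 0 := by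
  obtain ⟨w, rfl⟩ := hx
  rw [mulVecLin_apply, mulVec_transpose, ← dotProduct_mulVec, hk, dotProduct_zero]

theorem Matrix.mulVec_eq_zero_of_rows_mem_range_transpose [CommSemiring α] [Fintype m]
    {B : Matrix m n α} {M : Matrix q n α} {k : n → α}
    (hM : ∀ i, M i ∈ LinearMap.range Bᵀ.mulVecLin) (hk : B *ᵥ k = 0) : M *ᵥ k = 0 :=
  funext fun i => dotProduct_eq_zero_of_mem_range_transpose (hM i) hk

theorem Matrix.mulVec_mulVec_eq_zero_of_mul_add_mul_eq_zero_s11 [Semiring α] [Fintype m]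
    {A : Matrix q p α} {L : Matrix p n α} {S : Matrix q m α} {B : Matrix m n α} {k : n → α}
    (hAL : A * L + S * B = 0) (hk : B *ᵥ k = 0) : A *ᵥ (L *ᵥ k) = 0 := by
  have := congrArg (· *ᵥ k) hAL
  simpa only [add_mulVec, ← mulVec_mulVec, hk, mulVec_zero, add_zero, zero_mulVec] using this

theorem Matrix.hammingNorm_mulVec_le_ncard_rows_ne_zero [Semiring α] [DecidableEq α]
    [Fintype q] (M : Matrix q n α) (k : n → α) :
    hammingNorm (M *ᵥ k) ≤ {i | M i ≠ 0}.ncard := by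
  rw [hammingNorm, ← Set.ncard_coe_finset]
  refine Set.ncard_le_ncard (fun i hi hrow => ?_) (Set.toFinite _)
  simp only [Finset.coe_filter, Finset.mem_univ, true_and, Set.mem_ofPred_eq] at hi
  exact hi (by rw [mulVec, hrow, zero_dotProduct])

theorem logical_part_row_weight_general
    (ma na mb nb : ℕ)
    (δA : Matrix (Fin ma) (Fin na) (ZMod 2))
    (δB : Matrix (Fin mb) (Fin nb) (ZMod 2))
    (da : ℕ)
    (hda : ∀ v : Fin na → ZMod 2, v ≠ 0 → δA.mulVec v = 0 → da ≤ hammingNorm v)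
    (L ML OL : Matrix (Fin na) (Fin nb) (ZMod 2))
    (R : Matrix (Fin ma) (Fin mb) (ZMod 2))
    (hsyn : δA * L + R * δB = 0)
    (f : Fin na → ZMod 2)
    (k : Fin nb → ZMod 2) (hk : δB.mulVec k = 0)
    (hanti : dotProduct f (L.mulVec k) = 1)
    (hdecomp : L = ML + OL)
    (hML : ∀ i, (fun j => ML i j) ∈ LinearMap.range δB.transpose.mulVecLin) :
    da ≤ {i | (fun j => OL i j) ≠ 0}.ncard := by
  have hker : δA *ᵥ (L *ᵥ k) = 0 := mulVec_mulVec_eq_zero_of_mul_add_mul_eq_zero_s11 hsyn hk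
  have hne : L *ᵥ k ≠ 0 := by
    rintro h
    simp [h] at hanti
  have hLO : L *ᵥ k = OL *ᵥ k := by
    rw [hdecomp, add_mulVec, mulVec_eq_zero_of_rows_mem_range_transpose hML hk, zero_add]
  calc da ≤ hammingNorm (L *ᵥ k) := hda _ hne hker
    _ = hammingNorm (OL *ᵥ k) := by rw [hLO]
    _ ≤ _ := hammingNorm_mulVec_le_ncard_rows_ne_zero OL k

/-- Corollary 1(i): the logical part `O_L` of the left component of a non-trivial
logical `Z`-operator has at least `d_a` nonzero rows (i.e. `L` has at least `d_a`
rows not in `im δ_Bᵀ`). -/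
theorem logical_part_row_weight
    (ma na mb nb : ℕ)
    (δA : Matrix (Fin ma) (Fin na) (ZMod 2))
    (δB : Matrix (Fin mb) (Fin nb) (ZMod 2))
    (da : ℕ)
    (hda : ∀ v : Fin na → ZMod 2, v ≠ 0 → δA.mulVec v = 0 → da ≤ hammingNorm v)
    (WB : Submodule (ZMod 2) (Fin nb → ZMod 2))
    (hWB : IsCompl (LinearMap.range δB.transpose.mulVecLin) WB)
    (hWBunit : ∃ J : Set (Fin nb),
      WB = Submodule.span (ZMod 2) ((fun j => Pi.single j (1 : ZMod 2)) '' J))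
    (L ML OL : Matrix (Fin na) (Fin nb) (ZMod 2))
    (R : Matrix (Fin ma) (Fin mb) (ZMod 2))
    (hsyn : δA * L + R * δB = 0)
    (f : Fin na → ZMod 2) (hf : ∃ i₀, f = Pi.single i₀ 1)
    (k : Fin nb → ZMod 2) (hk : δB.mulVec k = 0)
    (hanti : dotProduct f (L.mulVec k) = 1)
    (hdecomp : L = ML + OL)
    (hML : ∀ i, (fun j => ML i j) ∈ LinearMap.range δB.transpose.mulVecLin)
    (hOL : ∀ i, (fun j => OL i j) ∈ WB) :
    da ≤ {i | (fun j => OL i j) ≠ 0}.ncard :=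
  logical_part_row_weight_general ma na mb nb δA δB da hda L ML OL R hsyn f k hk hanti hdecomp hML
end
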